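/- Define f(y) = −(π²/6)y² − ∑_{n≥1} cos(n y log φ)/(φⁿ n²) + y ∑_{n≥1} sin(n y log φ)/(φⁿ n²) + Li₂(1/φ), with φ the golden ratio. Then f(0) = 0, f′(0) = 0, and f″(y) ≤ yφ log²(φ) + (φ+2) log²(φ) − 2π²/15 < 0 for all 0 < y ≤ 1; consequently f(y) < 0 for 0 < y ≤ 1. -/

import Mathlib

/-- The dilogarithm `Li₂(x) = ∑_{n≥1} xⁿ/n²`. -/
noncomputable def li2 (x : ℝ) : ℝ := ∑' n : ℕ, x ^ (n + 1) / ((n : ℝ) + 1) ^ 2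

/-- The golden ratio. -/
noncomputable def φ : ℝ := (1 + Real.sqrt 5) / 2

/-- The function `f(y) = (1+y²)s(y)` from the proof of Lemma 4.5. -/
noncomputable def f (y : ℝ) : ℝ :=
  -(Real.pi ^ 2 / 6) * y ^ 2
    - (∑' n : ℕ, Real.cos (((n : ℝ) + 1) * y * Real.log φ) / (φ ^ (n + 1) * ((n : ℝ) + 1) ^ 2))
    + y * (∑' n : ℕ, Real.sin (((n : ℝ) + 1) * y * Real.log φ) / (φ ^ (n + 1) * ((n : ℝ) + 1) ^ 2))
    + li2 (1 / φ)

namespace FNegAux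

open Real

lemma phi_pos : 0 < φ := by
  have : 0 ≤ Real.sqrt 5 := Real.sqrt_nonneg 5
  unfold φ; linarith

lemma one_lt_phi : 1 < φ := by
  have : 1 < Real.sqrt 5 := by
    rw [show (1:ℝ) = Real.sqrt 1 by simp]
    exact Real.sqrt_lt_sqrt (by norm_num) (by norm_num)
  unfold φ; linarith

lemma phi_sq : φ ^ 2 = φ + 1 := by
  have h5 : Real.sqrt 5 ^ 2 = 5 := Real.sq_sqrt (by norm_num)
  unfold φ; nlinarith [h5]

lemma phi_ne : φ ≠ 0 := ne_of_gt phi_pos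

lemma phi_lt : φ < 1.618034 := by
  have h : Real.sqrt 5 < 2.236068 := by
    rw [Real.sqrt_lt' (by norm_num)]
    norm_num
  unfold φ; linarith

lemma L_pos : 0 < Real.log φ := Real.log_pos one_lt_phi

lemma L_lt : Real.log φ < 0.4925 := by
  have hexp : φ < Real.exp 0.4925 := by
    have h1 : (1 + 0.4925/32 : ℝ) ^ (32:ℕ) ≤ Real.exp (0.4925/32) ^ (32:ℕ) := by
      apply pow_le_pow_left₀ (by norm_num)
      have := Real.add_one_le_exp (0.4925/32 : ℝ)
      linarith
    have h2 : Real.exp (0.4925/32) ^ (32:ℕ) = Real.exp 0.4925 := by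
      rw [← Real.exp_nat_mul]; norm_num
    have h3 : φ < (1 + 0.4925/32 : ℝ) ^ (32:ℕ) := by
      have := phi_lt
      nlinarith [this, (by norm_num : (1.618034:ℝ) < (1 + 0.4925/32 : ℝ) ^ (32:ℕ))]
    calc φ < (1 + 0.4925/32 : ℝ) ^ (32:ℕ) := h3
      _ ≤ Real.exp (0.4925/32) ^ (32:ℕ) := h1
      _ = Real.exp 0.4925 := h2
  calc Real.log φ < Real.log (Real.exp 0.4925) := Real.log_lt_log phi_pos hexp
    _ = 0.4925 := Real.log_exp _

lemma inv_phi_nonneg : (0:ℝ) ≤ 1/φ := div_nonneg zero_le_one phi_pos.le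
lemma inv_phi_lt_one : (1:ℝ)/φ < 1 := by
  rw [div_lt_one phi_pos]; exact one_lt_phi

lemma summable_geom_shift : Summable (fun n : ℕ => (1/φ : ℝ) ^ (n+1)) := by
  have := (summable_geometric_of_lt_one inv_phi_nonneg inv_phi_lt_one).mul_left (1/φ : ℝ)
  simpa [pow_succ, mul_comm] using this

lemma tsum_geom_shift : ∑' n : ℕ, (1/φ : ℝ) ^ (n+1) = φ := by
  have h1 : ∑' n : ℕ, (1/φ : ℝ) ^ (n+1) = (1/φ) * ∑' n : ℕ, (1/φ : ℝ) ^ n := by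
    rw [← tsum_mul_left]
    exact tsum_congr fun n => by ring
  have h2 : (1:ℝ) - 1/φ = 1/φ^2 := by
    field_simp [phi_ne]
    nlinarith [phi_sq]
  rw [h1, tsum_geometric_of_lt_one inv_phi_nonneg inv_phi_lt_one, h2]
  field_simp [phi_ne]

lemma one_le_cn (n : ℕ) : (1:ℝ) ≤ (n:ℝ) + 1 := by
  have : (0:ℝ) ≤ (n:ℝ) := Nat.cast_nonneg n
  linarith

lemma term_bound (x d : ℝ) (hx : |x| ≤ 1) (hd : 1 ≤ d) (n : ℕ) :
    |x / (φ ^ (n+1) * d)| ≤ (1/φ : ℝ) ^ (n+1) := by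
  have hφp : (0:ℝ) < φ ^ (n+1) := pow_pos phi_pos _
  have hdp : (0:ℝ) < d := lt_of_lt_of_le one_pos hd
  have key : |x| / (φ ^ (n+1) * d) ≤ 1 / φ ^ (n+1) := by
    rw [div_le_div_iff₀ (mul_pos hφp hdp) hφp]
    nlinarith [abs_nonneg x]
  rw [abs_div, abs_of_pos (mul_pos hφp hdp), div_pow, one_pow]
  exact key

lemma abs_tsum_le (t : ℕ → ℝ) (h : ∀ n, |t n| ≤ (1/φ : ℝ) ^ (n+1)) :
    |∑' n, t n| ≤ φ := by
  have hsum : Summable t := by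
    apply Summable.of_norm_bounded summable_geom_shift
    simpa [Real.norm_eq_abs] using h
  have habs : Summable (fun n => |t n|) := hsum.abs
  have hn : Summable (fun n => ‖t n‖) := by simpa [Real.norm_eq_abs] using habs
  have h1 : ‖∑' n, t n‖ ≤ ∑' n, ‖t n‖ := norm_tsum_le_tsum_norm hn
  simp only [Real.norm_eq_abs] at h1
  calc |∑' n, t n| ≤ ∑' n, |t n| := h1
    _ ≤ ∑' n : ℕ, (1/φ : ℝ) ^ (n+1) := Summable.tsum_le_tsum h habs summable_geom_shift
    _ = φ := tsum_geom_shift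

/-- Sums appearing in `f` and its derivatives. -/
noncomputable def S0 (y : ℝ) : ℝ :=
  ∑' n : ℕ, Real.cos (((n : ℝ) + 1) * y * Real.log φ) / (φ ^ (n + 1) * ((n : ℝ) + 1) ^ 2)
noncomputable def S1 (y : ℝ) : ℝ :=
  ∑' n : ℕ, Real.sin (((n : ℝ) + 1) * y * Real.log φ) / (φ ^ (n + 1) * ((n : ℝ) + 1) ^ 2)
noncomputable def T0 (y : ℝ) : ℝ :=
  ∑' n : ℕ, Real.sin (((n : ℝ) + 1) * y * Real.log φ) / (φ ^ (n + 1) * ((n : ℝ) + 1))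
noncomputable def T1 (y : ℝ) : ℝ :=
  ∑' n : ℕ, Real.cos (((n : ℝ) + 1) * y * Real.log φ) / (φ ^ (n + 1) * ((n : ℝ) + 1))
noncomputable def U0 (y : ℝ) : ℝ :=
  ∑' n : ℕ, Real.cos (((n : ℝ) + 1) * y * Real.log φ) / φ ^ (n + 1)
noncomputable def U1 (y : ℝ) : ℝ :=
  ∑' n : ℕ, Real.sin (((n : ℝ) + 1) * y * Real.log φ) / φ ^ (n + 1)

noncomputable def g1 (y : ℝ) : ℝ :=
  -(Real.pi ^ 2 / 3) * y + Real.log φ * T0 y + S1 y + y * (Real.log φ * T1 y)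

noncomputable def g2 (y : ℝ) : ℝ :=
  -(Real.pi ^ 2 / 3) + Real.log φ ^ 2 * U0 y + 2 * (Real.log φ * T1 y)
    - y * (Real.log φ ^ 2 * U1 y)

lemma hlin (n : ℕ) (y : ℝ) :
    HasDerivAt (fun z : ℝ => ((n : ℝ) + 1) * z * Real.log φ) (((n : ℝ) + 1) * Real.log φ) y := by
  simpa using (((hasDerivAt_id y).const_mul ((n:ℝ)+1)).mul_const (Real.log φ))

lemma cn_ne (n : ℕ) : ((n:ℝ) + 1) ≠ 0 := by positivity
lemma phipow_ne (n : ℕ) : (φ : ℝ) ^ (n+1) ≠ 0 := pow_ne_zero _ phi_ne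

lemma hderiv_c2 (n : ℕ) (y : ℝ) :
    HasDerivAt (fun z => Real.cos (((n : ℝ) + 1) * z * Real.log φ) / (φ ^ (n + 1) * ((n : ℝ) + 1) ^ 2))
      (-(Real.log φ * (Real.sin (((n : ℝ) + 1) * y * Real.log φ) / (φ ^ (n + 1) * ((n : ℝ) + 1))))) y := by
  have h := ((hlin n y).cos).div_const (φ ^ (n + 1) * ((n : ℝ) + 1) ^ 2)
  refine h.congr_deriv ?_
  field_simp [cn_ne n, phipow_ne n, phi_ne]

lemma hderiv_s2 (n : ℕ) (y : ℝ) :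
    HasDerivAt (fun z => Real.sin (((n : ℝ) + 1) * z * Real.log φ) / (φ ^ (n + 1) * ((n : ℝ) + 1) ^ 2))
      (Real.log φ * (Real.cos (((n : ℝ) + 1) * y * Real.log φ) / (φ ^ (n + 1) * ((n : ℝ) + 1)))) y := by
  have h := ((hlin n y).sin).div_const (φ ^ (n + 1) * ((n : ℝ) + 1) ^ 2)
  refine h.congr_deriv ?_
  field_simp [cn_ne n, phipow_ne n, phi_ne]

lemma hderiv_s1 (n : ℕ) (y : ℝ) :
    HasDerivAt (fun z => Real.sin (((n : ℝ) + 1) * z * Real.log φ) / (φ ^ (n + 1) * ((n : ℝ) + 1)))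
      (Real.log φ * (Real.cos (((n : ℝ) + 1) * y * Real.log φ) / φ ^ (n + 1))) y := by
  have h := ((hlin n y).sin).div_const (φ ^ (n + 1) * ((n : ℝ) + 1))
  refine h.congr_deriv ?_
  field_simp [cn_ne n, phipow_ne n, phi_ne]

lemma hderiv_c1 (n : ℕ) (y : ℝ) :
    HasDerivAt (fun z => Real.cos (((n : ℝ) + 1) * z * Real.log φ) / (φ ^ (n + 1) * ((n : ℝ) + 1)))
      (-(Real.log φ * (Real.sin (((n : ℝ) + 1) * y * Real.log φ) / φ ^ (n + 1)))) y := by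
  have h := ((hlin n y).cos).div_const (φ ^ (n + 1) * ((n : ℝ) + 1))
  refine h.congr_deriv ?_
  field_simp [cn_ne n, phipow_ne n, phi_ne]

lemma summable_Lgeom : Summable (fun n : ℕ => Real.log φ * (1/φ : ℝ) ^ (n+1)) :=
  summable_geom_shift.mul_left _

lemma deriv_bound_half (x : ℝ) (hx : |x| ≤ 1) (d : ℝ) (hd : 1 ≤ d) (n : ℕ) :
    ‖-(Real.log φ * (x / (φ ^ (n+1) * d)))‖ ≤ Real.log φ * (1/φ : ℝ) ^ (n+1) := by
  rw [Real.norm_eq_abs, abs_neg, abs_mul, abs_of_pos L_pos]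
  exact mul_le_mul_of_nonneg_left (term_bound x d hx hd n) L_pos.le

lemma deriv_bound_half' (x : ℝ) (hx : |x| ≤ 1) (d : ℝ) (hd : 1 ≤ d) (n : ℕ) :
    ‖Real.log φ * (x / (φ ^ (n+1) * d))‖ ≤ Real.log φ * (1/φ : ℝ) ^ (n+1) := by
  rw [Real.norm_eq_abs, abs_mul, abs_of_pos L_pos]
  exact mul_le_mul_of_nonneg_left (term_bound x d hx hd n) L_pos.le

lemma one_le_cn2 (n : ℕ) : (1:ℝ) ≤ ((n:ℝ) + 1) ^ 2 := by nlinarith [one_le_cn n]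

lemma summable_S0 (y : ℝ) :
    Summable (fun n : ℕ => Real.cos (((n : ℝ) + 1) * y * Real.log φ) / (φ ^ (n + 1) * ((n : ℝ) + 1) ^ 2)) := by
  apply Summable.of_norm_bounded summable_geom_shift
  intro n
  rw [Real.norm_eq_abs]
  exact term_bound _ _ (Real.abs_cos_le_one _) (one_le_cn2 n) n

lemma summable_S1 (y : ℝ) :
    Summable (fun n : ℕ => Real.sin (((n : ℝ) + 1) * y * Real.log φ) / (φ ^ (n + 1) * ((n : ℝ) + 1) ^ 2)) := by
  apply Summable.of_norm_bounded summable_geom_shift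
  intro n
  rw [Real.norm_eq_abs]
  exact term_bound _ _ (Real.abs_sin_le_one _) (one_le_cn2 n) n

lemma summable_T0 (y : ℝ) :
    Summable (fun n : ℕ => Real.sin (((n : ℝ) + 1) * y * Real.log φ) / (φ ^ (n + 1) * ((n : ℝ) + 1))) := by
  apply Summable.of_norm_bounded summable_geom_shift
  intro n
  rw [Real.norm_eq_abs]
  exact term_bound _ _ (Real.abs_sin_le_one _) (one_le_cn n) n

lemma summable_T1 (y : ℝ) :
    Summable (fun n : ℕ => Real.cos (((n : ℝ) + 1) * y * Real.log φ) / (φ ^ (n + 1) * ((n : ℝ) + 1))) := by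
  apply Summable.of_norm_bounded summable_geom_shift
  intro n
  rw [Real.norm_eq_abs]
  exact term_bound _ _ (Real.abs_cos_le_one _) (one_le_cn n) n

lemma deriv_bound_one (x : ℝ) (hx : |x| ≤ 1) (n : ℕ) :
    ‖Real.log φ * (x / φ ^ (n+1))‖ ≤ Real.log φ * (1/φ : ℝ) ^ (n+1) := by
  rw [Real.norm_eq_abs, abs_mul, abs_of_pos L_pos]
  have h := term_bound x 1 hx le_rfl n
  rw [mul_one] at h
  exact mul_le_mul_of_nonneg_left h L_pos.le

lemma deriv_bound_one_neg (x : ℝ) (hx : |x| ≤ 1) (n : ℕ) :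
    ‖-(Real.log φ * (x / φ ^ (n+1)))‖ ≤ Real.log φ * (1/φ : ℝ) ^ (n+1) := by
  rw [norm_neg]; exact deriv_bound_one x hx n

lemma hS0 (y : ℝ) : HasDerivAt S0 (-(Real.log φ * T0 y)) y := by
  have key := hasDerivAt_tsum (u := fun n : ℕ => Real.log φ * (1/φ : ℝ) ^ (n+1))
    (g := fun (n : ℕ) (z : ℝ) => Real.cos (((n : ℝ) + 1) * z * Real.log φ) / (φ ^ (n + 1) * ((n : ℝ) + 1) ^ 2))
    (g' := fun (n : ℕ) (z : ℝ) => -(Real.log φ * (Real.sin (((n : ℝ) + 1) * z * Real.log φ) / (φ ^ (n + 1) * ((n : ℝ) + 1)))))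
    summable_Lgeom (fun n z => hderiv_c2 n z)
    (fun n z => deriv_bound_half _ (Real.abs_sin_le_one _) _ (one_le_cn n) n)
    (summable_S0 y) y
  have hval : (∑' n : ℕ, -(Real.log φ * (Real.sin (((n : ℝ) + 1) * y * Real.log φ) / (φ ^ (n + 1) * ((n : ℝ) + 1)))))
      = -(Real.log φ * T0 y) := by
    rw [tsum_neg, tsum_mul_left]; rfl
  rw [hval] at key
  exact key

lemma hS1 (y : ℝ) : HasDerivAt S1 (Real.log φ * T1 y) y := by
  have key := hasDerivAt_tsum (u := fun n : ℕ => Real.log φ * (1/φ : ℝ) ^ (n+1))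
    (g := fun (n : ℕ) (z : ℝ) => Real.sin (((n : ℝ) + 1) * z * Real.log φ) / (φ ^ (n + 1) * ((n : ℝ) + 1) ^ 2))
    (g' := fun (n : ℕ) (z : ℝ) => Real.log φ * (Real.cos (((n : ℝ) + 1) * z * Real.log φ) / (φ ^ (n + 1) * ((n : ℝ) + 1))))
    summable_Lgeom (fun n z => hderiv_s2 n z)
    (fun n z => deriv_bound_half' _ (Real.abs_cos_le_one _) _ (one_le_cn n) n)
    (summable_S1 y) y
  have hval : (∑' n : ℕ, Real.log φ * (Real.cos (((n : ℝ) + 1) * y * Real.log φ) / (φ ^ (n + 1) * ((n : ℝ) + 1))))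
      = Real.log φ * T1 y := tsum_mul_left
  rw [hval] at key
  exact key

lemma hT0 (y : ℝ) : HasDerivAt T0 (Real.log φ * U0 y) y := by
  have key := hasDerivAt_tsum (u := fun n : ℕ => Real.log φ * (1/φ : ℝ) ^ (n+1))
    (g := fun (n : ℕ) (z : ℝ) => Real.sin (((n : ℝ) + 1) * z * Real.log φ) / (φ ^ (n + 1) * ((n : ℝ) + 1)))
    (g' := fun (n : ℕ) (z : ℝ) => Real.log φ * (Real.cos (((n : ℝ) + 1) * z * Real.log φ) / φ ^ (n + 1)))
    summable_Lgeom (fun n z => hderiv_s1 n z)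
    (fun n z => deriv_bound_one _ (Real.abs_cos_le_one _) n)
    (summable_T0 y) y
  have hval : (∑' n : ℕ, Real.log φ * (Real.cos (((n : ℝ) + 1) * y * Real.log φ) / φ ^ (n + 1)))
      = Real.log φ * U0 y := tsum_mul_left
  rw [hval] at key
  exact key

lemma hT1 (y : ℝ) : HasDerivAt T1 (-(Real.log φ * U1 y)) y := by
  have key := hasDerivAt_tsum (u := fun n : ℕ => Real.log φ * (1/φ : ℝ) ^ (n+1))
    (g := fun (n : ℕ) (z : ℝ) => Real.cos (((n : ℝ) + 1) * z * Real.log φ) / (φ ^ (n + 1) * ((n : ℝ) + 1)))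
    (g' := fun (n : ℕ) (z : ℝ) => -(Real.log φ * (Real.sin (((n : ℝ) + 1) * z * Real.log φ) / φ ^ (n + 1))))
    summable_Lgeom (fun n z => hderiv_c1 n z)
    (fun n z => deriv_bound_one_neg _ (Real.abs_sin_le_one _) n)
    (summable_T1 y) y
  have hval : (∑' n : ℕ, -(Real.log φ * (Real.sin (((n : ℝ) + 1) * y * Real.log φ) / φ ^ (n + 1))))
      = -(Real.log φ * U1 y) := by
    rw [tsum_neg, tsum_mul_left]; rfl
  rw [hval] at key
  exact key

lemma f_eq : f = fun y => -(Real.pi ^ 2 / 6) * y ^ 2 - S0 y + y * S1 y + li2 (1 / φ) := rfl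

lemma hf (y : ℝ) : HasDerivAt f (g1 y) y := by
  have h1 : HasDerivAt (fun z : ℝ => -(Real.pi ^ 2 / 6) * z ^ 2) (-(Real.pi ^ 2 / 6) * (2 * y)) y := by
    have := (hasDerivAt_pow 2 y).const_mul (-(Real.pi ^ 2 / 6))
    simpa [mul_comm, mul_assoc] using this
  have h3 : HasDerivAt (fun z : ℝ => z * S1 z) (1 * S1 y + y * (Real.log φ * T1 y)) y :=
    (hasDerivAt_id y).mul (hS1 y)
  have h := ((h1.sub (hS0 y)).add h3).add_const (li2 (1 / φ))
  have hval : g1 y = -(Real.pi ^ 2 / 6) * (2 * y) - -(Real.log φ * T0 y)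
      + (1 * S1 y + y * (Real.log φ * T1 y)) := by
    unfold g1; ring
  rw [f_eq, hval]
  exact h

lemma hg1 (y : ℝ) : HasDerivAt g1 (g2 y) y := by
  have h1 : HasDerivAt (fun z : ℝ => -(Real.pi ^ 2 / 3) * z) (-(Real.pi ^ 2 / 3)) y := by
    simpa using (hasDerivAt_id y).const_mul (-(Real.pi ^ 2 / 3))
  have h2 : HasDerivAt (fun z : ℝ => Real.log φ * T0 z) (Real.log φ * (Real.log φ * U0 y)) y :=
    (hT0 y).const_mul _
  have h4 : HasDerivAt (fun z : ℝ => z * (Real.log φ * T1 z))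
      (1 * (Real.log φ * T1 y) + y * (Real.log φ * -(Real.log φ * U1 y))) y :=
    (hasDerivAt_id y).mul ((hT1 y).const_mul _)
  have h := ((h1.add h2).add (hS1 y)).add h4
  have hval : g2 y = -(Real.pi ^ 2 / 3) + Real.log φ * (Real.log φ * U0 y) + Real.log φ * T1 y
      + (1 * (Real.log φ * T1 y) + y * (Real.log φ * -(Real.log φ * U1 y))) := by
    unfold g2; ring
  rw [hval]
  exact h

lemma deriv_f_eq : deriv f = g1 := funext fun y => (hf y).deriv

lemma deriv_deriv_f (y : ℝ) : deriv (deriv f) y = g2 y := by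
  rw [deriv_f_eq]; exact (hg1 y).deriv

lemma T0_zero : T0 0 = 0 := by
  unfold T0
  simp

lemma S1_zero : S1 0 = 0 := by
  unfold S1
  simp

lemma g1_zero : g1 0 = 0 := by
  unfold g1
  rw [T0_zero, S1_zero]
  ring

lemma S0_zero_eq : S0 0 = li2 (1 / φ) := by
  unfold S0 li2
  apply tsum_congr
  intro n
  rw [mul_zero, zero_mul, Real.cos_zero, div_pow, one_pow, div_div]

lemma f_zero : f 0 = 0 := by
  rw [f_eq]
  simp [S0_zero_eq]

lemma hU0 (y : ℝ) : |U0 y| ≤ φ := by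
  apply abs_tsum_le
  intro n
  have h := term_bound (Real.cos (((n : ℝ) + 1) * y * Real.log φ)) 1 (Real.abs_cos_le_one _) le_rfl n
  rwa [mul_one] at h

lemma hU1 (y : ℝ) : |U1 y| ≤ φ := by
  apply abs_tsum_le
  intro n
  have h := term_bound (Real.sin (((n : ℝ) + 1) * y * Real.log φ)) 1 (Real.abs_sin_le_one _) le_rfl n
  rwa [mul_one] at h

lemma hT1abs (y : ℝ) : |T1 y| ≤ φ := by
  apply abs_tsum_le
  intro n
  exact term_bound _ _ (Real.abs_cos_le_one _) (one_le_cn n) n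

lemma pi_sq : Real.pi ^ 2 > 3.141592 ^ 2 := by
  nlinarith [Real.pi_gt_d6, Real.pi_pos]

lemma g2_le (y : ℝ) (hy0 : 0 < y) (hy1 : y ≤ 1) :
    g2 y ≤ y * φ * Real.log φ ^ 2 + (φ + 2) * Real.log φ ^ 2 - 2 * Real.pi ^ 2 / 15 := by
  have hu0 := abs_le.mp (hU0 y)
  have hu1 := abs_le.mp (hU1 y)
  have ht1 := abs_le.mp (hT1abs y)
  have hL := L_lt
  have hL0 := L_pos
  have hφ := phi_lt
  have hφ1 := one_lt_phi
  have e1 : Real.log φ ^ 2 * U0 y ≤ Real.log φ ^ 2 * φ :=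
    mul_le_mul_of_nonneg_left hu0.2 (sq_nonneg _)
  have e2 : Real.log φ * T1 y ≤ Real.log φ * φ :=
    mul_le_mul_of_nonneg_left ht1.2 hL0.le
  have e3 : -(y * (Real.log φ ^ 2 * U1 y)) ≤ y * (Real.log φ ^ 2 * φ) := by
    nlinarith [mul_nonneg (mul_nonneg hy0.le (sq_nonneg (Real.log φ)))
      (by linarith [hu1.1] : (0:ℝ) ≤ φ + U1 y)]
  have p1 : Real.log φ * φ < 0.4925 * 1.618034 := by
    nlinarith [hL, hφ, hL0, phi_pos]
  have p2 := pi_sq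
  unfold g2
  nlinarith [e1, e2, e3, p1, p2, sq_nonneg (Real.log φ)]

lemma bound_neg (y : ℝ) (hy0 : 0 < y) (hy1 : y ≤ 1) :
    y * φ * Real.log φ ^ 2 + (φ + 2) * Real.log φ ^ 2 - 2 * Real.pi ^ 2 / 15 < 0 := by
  have p1 : Real.log φ ^ 2 < 0.4925 ^ 2 := by nlinarith [L_lt, L_pos]
  have p2 := pi_sq
  have p3 : φ * Real.log φ ^ 2 < 1.618034 * 0.4925 ^ 2 := by
    nlinarith [phi_lt, p1, phi_pos, sq_nonneg (Real.log φ), L_pos]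
  have p4 : y * φ * Real.log φ ^ 2 ≤ φ * Real.log φ ^ 2 := by
    nlinarith [mul_nonneg (mul_nonneg (sub_nonneg.mpr hy1) phi_pos.le) (sq_nonneg (Real.log φ))]
  linarith [p1, p2, p3, p4]

lemma g2_neg (y : ℝ) (hy0 : 0 < y) (hy1 : y ≤ 1) : g2 y < 0 :=
  lt_of_le_of_lt (g2_le y hy0 hy1) (bound_neg y hy0 hy1)

lemma f_neg (y : ℝ) (hy0 : 0 < y) (hy1 : y ≤ 1) : f y < 0 := by
  have hdiffg1 : Differentiable ℝ g1 := fun z => (hg1 z).differentiableAt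
  have hdifff : Differentiable ℝ f := fun z => (hf z).differentiableAt
  have hanti1 : StrictAntiOn g1 (Set.Icc 0 1) := by
    apply strictAntiOn_of_deriv_neg (convex_Icc 0 1) hdiffg1.continuous.continuousOn
    intro x hx
    rw [interior_Icc] at hx
    rw [(hg1 x).deriv]
    exact g2_neg x hx.1 hx.2.le
  have hg1neg : ∀ z ∈ Set.Ioc (0:ℝ) 1, g1 z < 0 := by
    intro z hz
    have h := hanti1 (Set.left_mem_Icc.mpr zero_le_one) ⟨hz.1.le, hz.2⟩ hz.1
    rw [g1_zero] at h
    exact h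
  have hanti2 : StrictAntiOn f (Set.Icc 0 1) := by
    apply strictAntiOn_of_deriv_neg (convex_Icc 0 1) hdifff.continuous.continuousOn
    intro x hx
    rw [interior_Icc] at hx
    rw [deriv_f_eq]
    exact hg1neg x ⟨hx.1, hx.2.le⟩
  have h := hanti2 (Set.left_mem_Icc.mpr zero_le_one) ⟨hy0.le, hy1⟩ hy0
  rw [f_zero] at h
  exact h

end FNegAux

theorem f_neg_on_unit_interval :
    f 0 = 0 ∧ deriv f 0 = 0 ∧
      ∀ y : ℝ, 0 < y → y ≤ 1 →
        (deriv (deriv f) y ≤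
            y * φ * Real.log φ ^ 2 + (φ + 2) * Real.log φ ^ 2 - 2 * Real.pi ^ 2 / 15 ∧
          y * φ * Real.log φ ^ 2 + (φ + 2) * Real.log φ ^ 2 - 2 * Real.pi ^ 2 / 15 < 0 ∧
          f y < 0) := by
  refine ⟨FNegAux.f_zero, ?_, ?_⟩
  · rw [FNegAux.deriv_f_eq, FNegAux.g1_zero]
  · intro y hy0 hy1
    refine ⟨?_, FNegAux.bound_neg y hy0 hy1, FNegAux.f_neg y hy0 hy1⟩
    rw [FNegAux.deriv_deriv_f]
    exact FNegAux.g2_le y hy0 hy1
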